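/- arXiv:math/0305166 — 5 statements merged into one kernel-verified Lean document; each statement's English description precedes it below -/
import Mathlib

section
/- For every ε > 0 and n ∈ ℕ there exists δ > 0 such that: if A is a C*-algebra, p ∈ A is a projection, and w₁,…,wₙ ∈ A satisfy ‖wⱼ* wᵢ − δ_{i,j} p‖ < δ for all 1 ≤ i,j ≤ n (where δ_{i,j} is the Kronecker delta), then there exist partial isometries v₁,…,vₙ ∈ A with vⱼ* vᵢ = δ_{i,j} p for all i,j, and ‖wᵢ − vᵢ‖ < ε for all i. -/
/-!
Induction on `n`. Given exact partial isometries `v₁, …, vₙ` close to `w₁, …, wₙ`, project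
`wₙ₊₁` off their ranges: `u = (1 - ∑ vᵢ vᵢ*) wₙ₊₁`. Since `vᵢ* wₙ₊₁ ≈ wᵢ* wₙ₊₁ ≈ 0`, `u` is
still close to `wₙ₊₁` and `u* u ≈ p`. Then `v = u p b^(-1/2)` with `b = p u* u p + (1 - p)`
satisfies `v* v = p` exactly, is close to `u`, and lies in `u A`, so it stays orthogonal to
the `vᵢ`.
-/

open Filter Topology

section CStarRing

variable {E : Type*} [NormedRing E] [StarRing E] [CStarRing E]

theorem IsStarProjection.norm_mul_mul_le {q : E} (hq : IsStarProjection q) (x : E) :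
    ‖q * x * q‖ ≤ ‖x‖ :=
  calc ‖q * x * q‖ ≤ ‖q‖ * ‖x‖ * ‖q‖ := norm_mul₃_le
    _ ≤ 1 * ‖x‖ * 1 := by gcongr <;> exact hq.norm_le
    _ = ‖x‖ := by ring

theorem IsStarProjection.sq_norm_mul_one_sub_le {p : E} (hp : IsStarProjection p) (u : E) :
    ‖u * (1 - p)‖ ^ 2 ≤ ‖star u * u - p‖ := by
  have hq := hp.one_sub
  have : star (u * (1 - p)) * (u * (1 - p)) = (1 - p) * (star u * u - p) * (1 - p) := by
    rw [star_mul, hq.isSelfAdjoint.star_eq, mul_sub (1 - p), hp.one_sub_mul_self, sub_zero]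
    noncomm_ring
  rw [sq, ← CStarRing.norm_star_mul_self, this]
  exact hq.norm_mul_mul_le _

theorem IsStarProjection.sq_norm_le {p u : E} {δ : ℝ} (hp : IsStarProjection p)
    (hu : ‖star u * u - p‖ ≤ δ) : ‖u‖ ^ 2 ≤ 1 + δ := by
  rw [sq, ← CStarRing.norm_star_mul_self]
  linarith [norm_le_norm_add_norm_sub' (star u * u) p, hp.norm_le]

theorem IsStarProjection.mul_eq_self_of_star_mul_self_eq {p c : E} (hp : IsStarProjection p)
    (hc : star c * c = p) : c * p = c := by
  have h := hp.sq_norm_mul_one_sub_le c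
  rw [hc, sub_self, norm_zero] at h
  have : c * (1 - p) = 0 := norm_eq_zero.mp (by nlinarith [norm_nonneg (c * (1 - p))])
  rwa [mul_sub, mul_one, sub_eq_zero, eq_comm] at this

theorem IsStarProjection.exists_orthogonal_near {ι : Type*} [Fintype ι] [DecidableEq ι]
    {p W : E} {v : ι → E} {η : ℝ} (hp : IsStarProjection p)
    (hv : ∀ i j, star (v j) * v i = if i = j then p else 0)
    (hW : ‖star W * W - p‖ ≤ η) (hvW : ∀ i, ‖star (v i) * W‖ ≤ η) :
    ∃ u, (∀ i, star (v i) * u = 0) ∧ ‖W - u‖ ≤ Fintype.card ι * η ∧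
      ‖star u * u - p‖ ≤ η + Fintype.card ι * η ^ 2 := by
  set u := W - ∑ i, v i * (star (v i) * W)
  have hpv : ∀ i, p * star (v i) = star (v i) := fun i => by
    rw [← hp.isSelfAdjoint.star_eq, ← star_mul,
      hp.mul_eq_self_of_star_mul_self_eq (by simpa using hv i i)]
  have hvu : ∀ j, star (v j) * u = 0 := fun j => by
    simp only [u, mul_sub, Finset.mul_sum, ← mul_assoc, hv, ite_mul, zero_mul,
      Finset.sum_ite_eq', Finset.mem_univ, if_true, hpv, sub_self]
  have huu : star u * u - p =
      (star W * W - p) - ∑ i, star (star (v i) * W) * (star (v i) * W) := by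
    have huv : ∀ i, star u * v i = 0 := fun i => by
      rw [← star_star (v i), ← star_mul, hvu, star_zero]
    have : star u * ∑ i, v i * (star (v i) * W) = 0 := by
      simp only [Finset.mul_sum, ← mul_assoc, huv, zero_mul, Finset.sum_const_zero]
    rw [show star u * u = star u * W - star u * ∑ i, v i * (star (v i) * W) from mul_sub .., this,
      sub_zero]
    simp only [u, star_sub, star_sum, star_mul, star_star, sub_mul, Finset.sum_mul, mul_assoc]
    abel
  have hv1 : ∀ i, ‖v i‖ ≤ 1 := fun i => by
    nlinarith [hp.sq_norm_le (u := v i) (δ := 0) (by simp [hv i i]), norm_nonneg (v i)]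
  refine ⟨u, hvu, ?_, ?_⟩
  · calc ‖W - u‖ = ‖∑ i, v i * (star (v i) * W)‖ := by simp [u]
      _ ≤ ∑ i, ‖v i‖ * ‖star (v i) * W‖ := norm_sum_le_of_le _ fun i _ => norm_mul_le _ _
      _ ≤ ∑ _i : ι, 1 * η := by gcongr with i; exacts [hv1 i, hvW i]
      _ = Fintype.card ι * η := by simp
  · calc ‖star u * u - p‖ ≤ ‖star W * W - p‖ + ∑ i, ‖star (v i) * W‖ ^ 2 := by
          rw [huu]
          refine (norm_sub_le _ _).trans (add_le_add le_rfl ((norm_sum_le _ _).trans_eq ?_))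
          simp only [CStarRing.norm_star_mul_self, sq]
      _ ≤ η + ∑ _i : ι, η ^ 2 := by gcongr with i; exacts [hvW i]
      _ = η + Fintype.card ι * η ^ 2 := by simp

end CStarRing

theorem abs_sub_one_le_norm_sub_one_of_mem_spectrum {E : Type*} [NormedRing E] [StarRing E]
    [CStarRing E] [NormedAlgebra ℝ E] [CompleteSpace E] {b : E} {x : ℝ}
    (hx : x ∈ spectrum ℝ b) : |x - 1| ≤ ‖b - 1‖ := by
  obtain _ | _ := subsingleton_or_nontrivial E
  · simp [spectrum.of_subsingleton] at hx
  have : x - 1 ∈ spectrum ℝ (b - algebraMap ℝ E 1) := by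
    rw [← spectrum.sub_singleton_eq]
    exact Set.sub_mem_sub hx rfl
  rw [map_one] at this
  exact spectrum.norm_le_norm_of_mem this

theorem abs_one_sub_inv_sqrt_le {δ x : ℝ} (hδ : δ ≤ 1 / 4) (hx : |x - 1| ≤ δ) :
    |1 - (√x)⁻¹| ≤ 2 * δ := by
  rw [abs_le] at hx
  have hx0 : 0 < x := by linarith
  have ht : √x * √x = x := Real.mul_self_sqrt hx0.le
  have ht0 : 0 < √x := Real.sqrt_pos.mpr hx0
  have hti : √x * (√x)⁻¹ = 1 := mul_inv_cancel₀ ht0.ne'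
  have : 1 - δ ≤ √x := by nlinarith
  rw [abs_le]
  constructor <;> nlinarith [inv_pos.mpr ht0]

variable {A : Type*} [CStarAlgebra A]

theorem cfc_inv_sqrt_mul_mul_cfc_inv_sqrt {b : A} (hb : IsSelfAdjoint b) (h : ‖b - 1‖ < 1) :
    cfc (fun x : ℝ => (√x)⁻¹) b * b * cfc (fun x : ℝ => (√x)⁻¹) b = 1 := by
  have hpos : ∀ x ∈ spectrum ℝ b, 0 < √x := fun x hx => Real.sqrt_pos.mpr <| by
    linarith [abs_lt.mp ((abs_sub_one_le_norm_sub_one_of_mem_spectrum hx).trans_lt h)]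
  have hcont : ContinuousOn (fun x : ℝ => (√x)⁻¹) (spectrum ℝ b) :=
    Real.continuous_sqrt.continuousOn.inv₀ fun x hx => (hpos x hx).ne'
  nth_rw 2 [← cfc_id' ℝ b]
  rw [← cfc_mul .., ← cfc_mul .., ← cfc_one ℝ b]
  refine cfc_congr fun x hx => ?_
  have := (hpos x hx).ne'
  field_simp
  simp [Real.sq_sqrt (Real.sqrt_pos.mp (hpos x hx)).le]

theorem norm_one_sub_cfc_inv_sqrt_le {b : A} (hb : IsSelfAdjoint b) {δ : ℝ} (hδ : δ ≤ 1 / 4)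
    (h : ‖b - 1‖ ≤ δ) : ‖1 - cfc (fun x : ℝ => (√x)⁻¹) b‖ ≤ 2 * δ := by
  have hspec : ∀ x ∈ spectrum ℝ b, |x - 1| ≤ δ := fun x hx =>
    (abs_sub_one_le_norm_sub_one_of_mem_spectrum hx).trans h
  have hcont : ContinuousOn (fun x : ℝ => (√x)⁻¹) (spectrum ℝ b) :=
    Real.continuous_sqrt.continuousOn.inv₀ fun x hx => (Real.sqrt_pos.mpr <| by
      linarith [abs_le.mp (hspec x hx)]).ne'
  rw [← cfc_one ℝ b, ← cfc_sub ..]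
  exact norm_cfc_le (by linarith [norm_nonneg (b - 1)]) fun x hx =>
    abs_one_sub_inv_sqrt_le hδ (hspec x hx)

theorem IsStarProjection.exists_star_mul_self_eq {p u : A} {δ : ℝ} (hp : IsStarProjection p)
    (hδ : δ ≤ 1 / 4) (hu : ‖star u * u - p‖ ≤ δ) :
    ∃ y, star (u * y) * (u * y) = p ∧ ‖u - u * y‖ ≤ √δ + 3 * δ := by
  have hpp : p * p = p := hp.isIdempotentElem.eq
  -- Adding `1 - p` makes `b` close to `1` while keeping it in the commutant of `p`.
  set b := p * (star u * u) * p + (1 - p)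
  set s := cfc (fun x : ℝ => (√x)⁻¹) b
  have hb : IsSelfAdjoint b := ((IsSelfAdjoint.star_mul_self u).conjugate_self
    hp.isSelfAdjoint).add hp.one_sub.isSelfAdjoint
  have hb1 : ‖b - 1‖ ≤ δ := by
    have : b - 1 = p * (star u * u - p) * p := by
      simp only [b, mul_sub, sub_mul, hpp]; abel
    exact this ▸ (hp.norm_mul_mul_le _).trans hu
  have hpb : p * b = p * (star u * u) * p ∧ b * p = p * (star u * u) * p := by
    simp only [b, mul_add, add_mul, ← mul_assoc, hpp, hp.mul_one_sub_self, hp.one_sub_mul_self]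
    simp [mul_assoc, hpp]
  have hps : Commute p s := ((Commute.cfc_real (hpb.1.trans hpb.2.symm).symm _)).symm
  have hsbs : s * b * s = 1 := cfc_inv_sqrt_mul_mul_cfc_inv_sqrt hb (hb1.trans_lt (by linarith))
  refine ⟨p * s, ?_, ?_⟩
  · calc star (u * (p * s)) * (u * (p * s)) = s * (b * p) * s := by
          rw [hpb.2, star_mul, star_mul, hp.isSelfAdjoint.star_eq,
            (cfc_predicate _ b : IsSelfAdjoint s).star_eq]
          noncomm_ring
      _ = s * b * s * p := by simp only [mul_assoc, hps.eq]
      _ = p := by rw [hsbs, one_mul]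
  · have h1p : ‖u * (1 - p)‖ ≤ √δ :=
      Real.le_sqrt_of_sq_le ((hp.sq_norm_mul_one_sub_le u).trans hu)
    have hu : ‖u‖ ≤ 3 / 2 := by nlinarith [hp.sq_norm_le hu, norm_nonneg u]
    calc ‖u - u * (p * s)‖ = ‖u * (1 - p) + u * p * (1 - s)‖ := by congr 1; noncomm_ring
      _ ≤ ‖u * (1 - p)‖ + ‖u‖ * ‖p‖ * ‖1 - s‖ := norm_add_le_of_le le_rfl norm_mul₃_le
      _ ≤ √δ + 3 / 2 * 1 * (2 * δ) := by
          gcongr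
          exacts [hp.norm_le, norm_one_sub_cfc_inv_sqrt_le hb hδ hb1]
      _ = √δ + 3 * δ := by ring

theorem snoc_star_mul_eq {n : ℕ} {p z : A} {v : Fin n → A}
    (hv : ∀ i j, star (v j) * v i = if i = j then p else 0) (hz : star z * z = p)
    (hvz : ∀ i, star (v i) * z = 0) (i j : Fin (n + 1)) :
    star ((Fin.snoc v z : Fin (n + 1) → A) j) * (Fin.snoc v z : Fin (n + 1) → A) i =
      if i = j then p else 0 := by
  induction i using Fin.lastCases <;> induction j using Fin.lastCases
  · simpa using hz
  · simp [hvz, (Fin.castSucc_lt_last _).ne']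
  · simpa [(Fin.castSucc_lt_last _).ne] using congrArg star (hvz _)
  · simpa using hv _ _

/-- `n η` is the cost of projecting off `n` ranges, `√ρ + 3ρ` with `ρ = η + n η²` that of
normalizing afterwards. -/
noncomputable def extensionError (n : ℕ) (η : ℝ) : ℝ :=
  n * η + √(η + n * η ^ 2) + 3 * (η + n * η ^ 2)

theorem exists_pos_extensionError_lt (n : ℕ) {ε : ℝ} (hε : 0 < ε) :
    ∃ η, 0 < η ∧ η < ε ∧ η + n * η ^ 2 ≤ 1 / 4 ∧ extensionError n η < ε := by
  have hdefect : Tendsto (fun η : ℝ => η + n * η ^ 2) (𝓝 0) (𝓝 0) :=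
    (by fun_prop : Continuous fun η : ℝ => η + n * η ^ 2).tendsto' 0 0 (by simp)
  have herror : Tendsto (extensionError n) (𝓝 0) (𝓝 0) :=
    (by unfold extensionError; fun_prop : Continuous (extensionError n)).tendsto' 0 0
      (by simp [extensionError])
  have hsmall := ((tendsto_id.eventually_lt_const hε).and
    ((hdefect.eventually_lt_const (by norm_num : (0 : ℝ) < 1 / 4)).and
      (herror.eventually_lt_const hε)))
  obtain ⟨η, hη, hηε, hη4, hηE⟩ :=
    ((eventually_mem_nhdsWithin (s := Set.Ioi 0) (a := 0)).and
      (nhdsWithin_le_nhds hsmall)).exists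
  exact ⟨η, hη, hηε, hη4.le, hηE⟩

theorem exists_orthogonal_partialIsometry_near_last {n : ℕ} {p : A} {v : Fin n → A}
    {w : Fin (n + 1) → A} {η : ℝ} (hp : IsStarProjection p)
    (hv : ∀ i j, star (v j) * v i = if i = j then p else 0)
    (hw : ∀ i j, ‖star (w j) * w i - (if i = j then p else 0)‖ ≤ η / 3)
    (hvw : ∀ i, ‖w i.castSucc - v i‖ ≤ η / 3) (hη : η + n * η ^ 2 ≤ 1 / 4) :
    ∃ z, star z * z = p ∧ (∀ i, star (v i) * z = 0) ∧
      ‖w (Fin.last n) - z‖ ≤ extensionError n η := by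
  set W := w (Fin.last n)
  have hWW : ‖star W * W - p‖ ≤ η / 3 := by simpa using hw (Fin.last n) (Fin.last n)
  have hη0 : 0 ≤ η := by linarith [norm_nonneg (star W * W - p)]
  have hW : ‖W‖ ≤ 2 := by nlinarith [hp.sq_norm_le hWW, norm_nonneg W, sq_nonneg η]
  have hvW : ∀ i, ‖star (v i) * W‖ ≤ η := fun i => by
    have hwW : ‖star (w i.castSucc) * W‖ ≤ η / 3 := by
      simpa [W, (Fin.castSucc_lt_last i).ne'] using hw (Fin.last n) i.castSucc
    calc ‖star (v i) * W‖ = ‖star (v i - w i.castSucc) * W + star (w i.castSucc) * W‖ := by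
          rw [star_sub, sub_mul, sub_add_cancel]
      _ ≤ ‖w i.castSucc - v i‖ * ‖W‖ + ‖star (w i.castSucc) * W‖ := by
          refine norm_add_le_of_le ((norm_mul_le _ _).trans_eq ?_) le_rfl
          rw [norm_star, norm_sub_rev]
      _ ≤ η / 3 * 2 + η / 3 := by gcongr; exact hvw i
      _ = η := by ring
  obtain ⟨u, hvu, hWu, huu⟩ := hp.exists_orthogonal_near hv (hWW.trans (by linarith)) hvW
  obtain ⟨y, hy, huy⟩ := hp.exists_star_mul_self_eq (by simpa using hη) (by simpa using huu)
  refine ⟨u * y, hy, fun i => by rw [← mul_assoc, hvu, zero_mul], ?_⟩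
  calc ‖W - u * y‖ ≤ ‖W - u‖ + ‖u - u * y‖ := norm_sub_le_norm_sub_add_norm_sub _ _ _
    _ ≤ extensionError n η := by
        simp only [Fintype.card_fin] at hWu
        unfold extensionError
        linarith

/-- Glimm's perturbation lemma: almost partial isometries with common support `p`
and almost orthogonal ranges can be perturbed to exact ones. -/
theorem glimm_perturbation (ε : ℝ) (hε : 0 < ε) (n : ℕ) :
    ∃ δ : ℝ, 0 < δ ∧
      ∀ (A : Type) [inst : CStarAlgebra A] (p : A) (w : Fin n → A),
        IsSelfAdjoint p → IsIdempotentElem p →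
        (∀ i j : Fin n, ‖star (w j) * w i - (if i = j then p else 0)‖ < δ) →
        ∃ v : Fin n → A,
          (∀ i j : Fin n, star (v j) * v i = if i = j then p else 0) ∧
          ∀ i : Fin n, ‖w i - v i‖ < ε := by
  induction n generalizing ε with
  | zero => exact ⟨1, one_pos, fun A _ p w _ _ _ => ⟨w, fun i => i.elim0, fun i => i.elim0⟩⟩
  | succ n ih =>
    obtain ⟨η, hη, hηε, hη_defect, hη_error⟩ := exists_pos_extensionError_lt n hε
    obtain ⟨δ, hδ, hδ_spec⟩ := ih (η / 3) (by positivity)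
    refine ⟨min δ (η / 3), by positivity, fun A _ p w hp hpi hw => ?_⟩
    obtain ⟨v, hv, hvw⟩ := hδ_spec A p (fun i => w i.castSucc) hp hpi fun i j => by
      simpa using (hw i.castSucc j.castSucc).trans_le (min_le_left _ _)
    obtain ⟨z, hz, hvz, hwz⟩ := exists_orthogonal_partialIsometry_near_last ⟨hpi, hp⟩ hv
      (fun i j => ((hw i j).trans_le (min_le_right _ _)).le) (fun i => (hvw i).le) hη_defect
    refine ⟨Fin.snoc v z, snoc_star_mul_eq hv hz hvz, Fin.lastCases ?_ fun i => ?_⟩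
    · simpa using hwz.trans_lt hη_error
    · simpa using (hvw i).trans (by linarith)
end

section
/- Let A be a C*-algebra of real rank zero and let φ be a state on A that can be excised. Then φ can be excised by projections: there is a net (p_λ) of projections in A with ‖p_λ a p_λ − φ(a) p_λ‖ → 0 for all a ∈ A. -/
/-!
Approximate each `h` of an excising net within `δ` by a self-adjoint `b` with finite spectrum and
take the spectral projection `p` of `b` for `[1 - 2δ, ∞)`. Since `‖h‖ = 1` some spectral value of
`b` exceeds `1 - 2δ`, so `p ≠ 0`, and `‖p - p h p‖ ≤ 3δ`. As `0 ≤ h ≤ 1` forces `h ≤ √h`, we get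
`(1 - √h)² ≤ 1 - h`, hence `‖p - √h p‖ ≤ √‖p - p h p‖`; so `p a p - φ(a) p` differs from
`p (√h a √h - φ(a) h) p` by `O(√δ ‖a‖)`.
-/

open scoped ComplexOrder
open Filter Topology

lemma IsStarProjection.norm_mul_mul_le_s3 {R : Type*} [NonUnitalNormedRing R] [StarRing R]
    [CStarRing R] {p : R} (hp : IsStarProjection p) (x : R) : ‖p * x * p‖ ≤ ‖x‖ :=
  calc ‖p * x * p‖ ≤ ‖p‖ * ‖x‖ * ‖p‖ := norm_mul₃_le
    _ ≤ 1 * ‖x‖ * 1 := by gcongr <;> exact hp.norm_le p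
    _ = ‖x‖ := by ring

section

variable {A : Type*} [CStarAlgebra A]

/-- `cfc` returns the junk value `0` unless the indicator is continuous on the spectrum of `b`,
as it is when that spectrum is finite. -/
noncomputable def spectralProjectionIci (t : ℝ) (b : A) : A :=
  cfc ((Set.Ici t).indicator 1) b

variable {t : ℝ} {b : A}

lemma isStarProjection_spectralProjectionIci (hfin : (spectrum ℝ b).Finite) :
    IsStarProjection (spectralProjectionIci t b) where
  isIdempotentElem := by
    rw [IsIdempotentElem, spectralProjectionIci,
      ← cfc_mul _ _ b (hfin.continuousOn _) (hfin.continuousOn _)]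
    refine cfc_congr fun x _ => ?_
    by_cases hx : x ∈ Set.Ici t <;> simp [hx]
  isSelfAdjoint := cfc_predicate _ b

lemma spectralProjectionIci_ne_zero (hb : IsSelfAdjoint b) (hfin : (spectrum ℝ b).Finite)
    {x : ℝ} (hx : x ∈ spectrum ℝ b) (htx : t ≤ x) : spectralProjectionIci t b ≠ 0 := by
  have : Nontrivial A := by
    by_contra hA
    rw [not_nontrivial_iff_subsingleton] at hA
    simp [spectrum.of_subsingleton] at hx
  intro h0
  have hmem : (Set.Ici t).indicator 1 x ∈ spectrum ℝ (spectralProjectionIci t b) := by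
    rw [spectralProjectionIci, cfc_map_spectrum _ b hb (hfin.continuousOn _)]
    exact Set.mem_image_of_mem _ hx
  simp [h0, Set.indicator_of_mem (Set.mem_Ici.mpr htx)] at hmem

lemma norm_spectralProjectionIci_sub_mul_mul_le (hb : IsSelfAdjoint b)
    (hfin : (spectrum ℝ b).Finite) {ε : ℝ} (hε : 0 ≤ ε)
    (hspec : ∀ x ∈ spectrum ℝ b, t ≤ x → |1 - x| ≤ ε) :
    ‖spectralProjectionIci t b - spectralProjectionIci t b * b * spectralProjectionIci t b‖
      ≤ ε := by
  set f := (Set.Ici t).indicator (1 : ℝ → ℝ)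
  have hf : ∀ g : ℝ → ℝ, ContinuousOn g (spectrum ℝ b) := hfin.continuousOn
  have hcfc : cfc (fun x => f x - f x * x * f x) b =
      spectralProjectionIci t b - spectralProjectionIci t b * b * spectralProjectionIci t b := by
    rw [cfc_sub _ _ b (hf _) (hf _), cfc_mul _ f b (hf _) (hf _), cfc_mul f _ b (hf _) (hf _),
      cfc_id' ℝ b hb, spectralProjectionIci]
  rw [← hcfc]
  refine norm_cfc_le hε fun x hx => ?_
  by_cases htx : t ≤ x
  · simpa [f, Set.indicator_of_mem (Set.mem_Ici.mpr htx)] using hspec x hx htx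
  · simpa [f, Set.indicator_of_notMem (Set.notMem_Ici.mpr (not_le.mp htx))] using hε

variable [PartialOrder A] [StarOrderedRing A]

lemma exists_mem_spectrum_gt_of_nonneg {h b : A} (hh : 0 ≤ h) (hb : IsSelfAdjoint b)
    {t : ℝ} (ht : 0 ≤ t) (hth : t < ‖h‖ - ‖h - b‖) : ∃ x ∈ spectrum ℝ b, t < x := by
  by_contra! hspec
  have hbt : b ≤ algebraMap ℝ A t := le_algebraMap_of_spectrum_le hspec
  have hhb : h - b ≤ algebraMap ℝ A ‖h - b‖ :=
    (IsSelfAdjoint.of_nonneg hh |>.sub hb).le_algebraMap_norm_self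
  have hle : h ≤ algebraMap ℝ A (‖h - b‖ + t) := by
    simpa only [sub_add_cancel, map_add] using add_le_add hhb hbt
  have := (CStarAlgebra.norm_le_iff_le_algebraMap h (by positivity) hh).mpr hle
  linarith

lemma CFC.le_sqrt_of_norm_le_one {h : A} (hh : 0 ≤ h) (hh1 : ‖h‖ ≤ 1) : h ≤ CFC.sqrt h := by
  rw [CFC.sqrt_eq_real_sqrt h, cfcₙ_eq_cfc]
  calc h = cfc id h := (cfc_id ℝ h).symm
    _ ≤ cfc Real.sqrt h := cfc_mono fun x hx => by
      have hx0 : 0 ≤ x := spectrum_nonneg_of_nonneg hh hx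
      have hsa : IsSelfAdjoint h := .of_nonneg hh
      have hx1 : x ≤ 1 :=
        ((le_algebraMap_iff_spectrum_le hsa).mp hsa.le_algebraMap_norm_self x hx).trans hh1
      exact Real.le_sqrt_of_sq_le (by simp only [id]; nlinarith)

lemma CFC.one_sub_sqrt_mul_self_le {h : A} (hh : 0 ≤ h) (hh1 : ‖h‖ ≤ 1) :
    (1 - CFC.sqrt h) * (1 - CFC.sqrt h) ≤ 1 - h := by
  have hexp : (1 - CFC.sqrt h) * (1 - CFC.sqrt h) = 1 - h - 2 • (CFC.sqrt h - h) := by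
    rw [two_nsmul]; noncomm_ring; rw [CFC.sqrt_mul_sqrt_self h]
  rw [hexp, sub_le_self_iff]
  exact nsmul_nonneg (sub_nonneg.mpr (CFC.le_sqrt_of_norm_le_one hh hh1)) 2

lemma IsStarProjection.norm_sub_sqrt_mul_le {h p : A} (hh : 0 ≤ h) (hh1 : ‖h‖ ≤ 1)
    (hp : IsStarProjection p) : ‖p - CFC.sqrt h * p‖ ≤ √‖p - p * h * p‖ := by
  have hs : IsSelfAdjoint (CFC.sqrt h) := .of_nonneg (CFC.sqrt_nonneg h)
  have hstar : star (p - CFC.sqrt h * p) * (p - CFC.sqrt h * p) =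
      p * ((1 - CFC.sqrt h) * (1 - CFC.sqrt h)) * p := by
    simp only [star_sub, star_mul, hp.isSelfAdjoint.star_eq, hs.star_eq]
    noncomm_ring
  have hle : star (p - CFC.sqrt h * p) * (p - CFC.sqrt h * p) ≤ p - p * h * p := by
    have hconj : p * (1 - h) * p = p - p * h * p := by
      rw [mul_sub, mul_one, sub_mul, hp.isIdempotentElem.eq]
    rw [hstar, ← hconj]
    simpa only [hp.isSelfAdjoint.star_eq] using
      star_left_conjugate_le_conjugate (CFC.one_sub_sqrt_mul_self_le hh hh1) p
  refine Real.le_sqrt_of_sq_le ?_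
  rw [sq, ← CStarRing.norm_star_mul_self]
  exact CStarAlgebra.norm_le_norm_of_nonneg_of_le (star_mul_self_nonneg _) hle

lemma IsStarProjection.norm_mul_mul_sub_smul_le {h p : A} (hh : 0 ≤ h) (hh1 : ‖h‖ ≤ 1)
    (hp : IsStarProjection p) (a : A) (c : ℂ) :
    ‖p * a * p - c • p‖ ≤ ‖CFC.sqrt h * a * CFC.sqrt h - c • h‖
      + 2 * √‖p - p * h * p‖ * ‖a‖ + ‖c‖ * ‖p - p * h * p‖ := by
  set s := CFC.sqrt h
  have hp1 : ‖p‖ ≤ 1 := hp.norm_le p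
  have hs1 : ‖s‖ ≤ 1 := by rw [CFC.norm_sqrt h]; exact Real.sqrt_le_one.mpr hh1
  have hps : ‖p - s * p‖ ≤ √‖p - p * h * p‖ := hp.norm_sub_sqrt_mul_le hh hh1
  have hsp : ‖p - p * s‖ = ‖p - s * p‖ := by
    rw [← norm_star (p - s * p), star_sub, star_mul, hp.isSelfAdjoint.star_eq,
      (IsSelfAdjoint.of_nonneg (CFC.sqrt_nonneg h)).star_eq]
  have hdecomp : p * a * p - c • p = (p - p * s) * a * p + p * s * a * (p - s * p)
      + p * (s * a * s - c • h) * p - c • (p - p * h * p) := by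
    simp only [mul_sub, sub_mul, mul_smul_comm, smul_mul_assoc, smul_sub, mul_assoc]
    abel
  have hps1 : ‖p * s‖ ≤ 1 := (norm_mul_le _ _).trans (mul_le_one₀ hp1 (norm_nonneg _) hs1)
  have h₁ : ‖(p - p * s) * a * p‖ ≤ √‖p - p * h * p‖ * ‖a‖ := by
    calc _ ≤ ‖p - p * s‖ * ‖a‖ * ‖p‖ := norm_mul₃_le
      _ ≤ √‖p - p * h * p‖ * ‖a‖ * 1 := by rw [hsp]; gcongr
      _ = _ := mul_one _
  have h₂ : ‖p * s * a * (p - s * p)‖ ≤ √‖p - p * h * p‖ * ‖a‖ := by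
    calc _ ≤ ‖p * s‖ * ‖a‖ * ‖p - s * p‖ := norm_mul₃_le
      _ ≤ 1 * ‖a‖ * √‖p - p * h * p‖ := by gcongr
      _ = _ := by ring
  have h₃ : ‖p * (s * a * s - c • h) * p‖ ≤ ‖s * a * s - c • h‖ := by
    calc _ ≤ ‖p‖ * ‖s * a * s - c • h‖ * ‖p‖ := norm_mul₃_le
      _ ≤ 1 * ‖s * a * s - c • h‖ * 1 := by gcongr
      _ = _ := by ring
  calc ‖p * a * p - c • p‖
      ≤ ‖(p - p * s) * a * p‖ + ‖p * s * a * (p - s * p)‖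
          + ‖p * (s * a * s - c • h) * p‖ + ‖c • (p - p * h * p)‖ := by
        rw [hdecomp]
        exact (norm_sub_le _ _).trans (add_le_add_left (norm_add₃_le ..) _)
    _ ≤ _ := by rw [norm_smul]; linarith

lemma exists_isStarProjection_norm_sub_mul_mul_le {h b : A} (hh : 0 ≤ h) (hh1 : ‖h‖ = 1)
    (hb : IsSelfAdjoint b) (hfin : (spectrum ℂ b).Finite) {δ : ℝ} (hδ : δ ≤ 1 / 2)
    (hhb : ‖h - b‖ < δ) : ∃ p : A, IsStarProjection p ∧ p ≠ 0 ∧ ‖p - p * h * p‖ ≤ 3 * δ := by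
  have hfinR : (spectrum ℝ b).Finite := by
    rw [← spectrum.preimage_algebraMap ℂ]
    exact hfin.preimage (algebraMap ℝ ℂ).injective.injOn
  have hδ0 : 0 < δ := (norm_nonneg _).trans_lt hhb
  obtain ⟨x, hx, hxt⟩ : ∃ x ∈ spectrum ℝ b, 1 - 2 * δ < x :=
    exists_mem_spectrum_gt_of_nonneg hh hb (by linarith) (by rw [hh1]; linarith)
  have hspec_le : ∀ y ∈ spectrum ℝ b, y ≤ 1 + δ := fun y hy =>
    calc y ≤ ‖b‖ := (le_algebraMap_iff_spectrum_le hb).mp hb.le_algebraMap_norm_self y hy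
      _ ≤ ‖h‖ + ‖h - b‖ := norm_le_norm_add_norm_sub h b
      _ ≤ 1 + δ := by rw [hh1]; linarith
  set p := spectralProjectionIci (1 - 2 * δ) b
  have hpb : ‖p - p * b * p‖ ≤ 2 * δ :=
    norm_spectralProjectionIci_sub_mul_mul_le hb hfinR (by linarith) fun y hy hty =>
      abs_le.mpr ⟨by linarith [hspec_le y hy], by linarith⟩
  have hp := isStarProjection_spectralProjectionIci (t := 1 - 2 * δ) hfinR
  refine ⟨p, hp, spectralProjectionIci_ne_zero hb hfinR hx hxt.le, ?_⟩
  calc ‖p - p * h * p‖ = ‖(p - p * b * p) + p * (b - h) * p‖ := by congr 1; noncomm_ring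
    _ ≤ ‖p - p * b * p‖ + ‖b - h‖ := (norm_add_le _ _).trans (by gcongr; exact hp.norm_mul_mul_le_s3 _)
    _ ≤ 3 * δ := by rw [norm_sub_rev b h]; linarith

lemma tendsto_norm_mul_mul_sub_smul_of_tendsto {ι κ : Type*} {l : Filter ι} {m : Filter κ}
    {h : ι → A} {p : ι → κ → A} {η : κ → ℝ} (hh : ∀ i, 0 ≤ h i ∧ ‖h i‖ ≤ 1)
    (hp : ∀ i n, IsStarProjection (p i n)) (hpη : ∀ i n, ‖p i n - p i n * h i * p i n‖ ≤ η n)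
    (hη : Tendsto η m (𝓝 0)) {a : A} {c : ℂ}
    (hexc : Tendsto (fun i => ‖CFC.sqrt (h i) * a * CFC.sqrt (h i) - c • h i‖) l (𝓝 0)) :
    Tendsto (fun x : ι × κ => ‖p x.1 x.2 * a * p x.1 x.2 - c • p x.1 x.2‖) (l ×ˢ m) (𝓝 0) := by
  have herr : Tendsto (fun η => 2 * √η * ‖a‖ + ‖c‖ * η) (𝓝 0) (𝓝 0) := by
    simpa using (show Continuous fun η : ℝ => 2 * √η * ‖a‖ + ‖c‖ * η by fun_prop).tendsto 0
  have hbound : Tendsto (fun x : ι × κ => ‖CFC.sqrt (h x.1) * a * CFC.sqrt (h x.1) - c • h x.1‖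
      + (2 * √(η x.2) * ‖a‖ + ‖c‖ * η x.2)) (l ×ˢ m) (𝓝 0) := by
    simpa only [add_zero, Function.comp_def] using
      (hexc.comp tendsto_fst).add ((herr.comp hη).comp tendsto_snd)
  refine squeeze_zero (fun _ => norm_nonneg _) (fun x => ((hp x.1 x.2).norm_mul_mul_sub_smul_le
    (hh x.1).1 (hh x.1).2 a c).trans ?_) hbound
  rw [add_assoc]
  gcongr <;> exact hpη x.1 x.2

end

theorem excision_by_projections_of_real_rank_zero_general
    (A : Type) [CStarAlgebra A] [PartialOrder A] [StarOrderedRing A]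
    (hrr : ∀ a : A, IsSelfAdjoint a → ∀ ε : ℝ, 0 < ε →
      ∃ b : A, IsSelfAdjoint b ∧ (spectrum ℂ b).Finite ∧ ‖a - b‖ < ε)
    (φ : A →L[ℂ] ℂ)
    (hexc : ∃ (ι : Type) (l : Filter ι) (h : ι → A), l.NeBot ∧
      (∀ i : ι, 0 ≤ h i ∧ ‖h i‖ = 1) ∧
      ∀ a : A,
        Filter.Tendsto (fun i => ‖CFC.sqrt (h i) * a * CFC.sqrt (h i) - φ a • h i‖)
          l (nhds 0)) :
    ∃ (ι : Type) (l : Filter ι) (p : ι → A), l.NeBot ∧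
      (∀ i : ι, IsSelfAdjoint (p i) ∧ IsIdempotentElem (p i) ∧ p i ≠ 0) ∧
      ∀ a : A,
        Filter.Tendsto (fun i => ‖p i * a * p i - φ a • p i‖) l (nhds 0) := by
  obtain ⟨ι, l, h, hl, hh, hexc⟩ := hexc
  set δ : ℕ → ℝ := fun n => 1 / ((n : ℝ) + 2)
  have hδ : Tendsto δ atTop (𝓝 0) := by
    refine (tendsto_one_div_add_atTop_nhds_zero_nat.comp (tendsto_add_atTop_nat 1)).congr
      fun n => ?_
    simp only [δ, Function.comp_apply, Nat.cast_add, Nat.cast_one]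
    ring
  have hproj (i : ι) (n : ℕ) :
      ∃ p : A, IsStarProjection p ∧ p ≠ 0 ∧ ‖p - p * h i * p‖ ≤ 3 * δ n := by
    obtain ⟨b, hb, hfin, hhb⟩ := hrr (h i) (.of_nonneg (hh i).1) (δ n) (by positivity)
    refine exists_isStarProjection_norm_sub_mul_mul_le (hh i).1 (hh i).2 hb hfin ?_ hhb
    exact one_div_le_one_div_of_le two_pos (by simp)
  choose p hp using hproj
  refine ⟨ι × ℕ, l ×ˢ atTop, fun x => p x.1 x.2, prod_neBot.mpr ⟨hl, atTop_neBot⟩,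
    fun x => ⟨(hp x.1 x.2).1.isSelfAdjoint, (hp x.1 x.2).1.isIdempotentElem, (hp x.1 x.2).2.1⟩,
    fun a => ?_⟩
  refine tendsto_norm_mul_mul_sub_smul_of_tendsto (fun i => ⟨(hh i).1, (hh i).2.le⟩)
    (fun i n => (hp i n).1) (fun i n => (hp i n).2.2) ?_ (hexc a)
  simpa only [mul_zero] using hδ.const_mul 3

/-- In a real rank zero C*-algebra, a state which can be excised can be excised
by projections. -/
theorem excision_by_projections_of_real_rank_zero
    (A : Type) [CStarAlgebra A] [PartialOrder A] [StarOrderedRing A]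
    (hrr : ∀ a : A, IsSelfAdjoint a → ∀ ε : ℝ, 0 < ε →
      ∃ b : A, IsSelfAdjoint b ∧ (spectrum ℂ b).Finite ∧ ‖a - b‖ < ε)
    (φ : A →L[ℂ] ℂ) (hpos : ∀ a : A, 0 ≤ φ (star a * a)) (hone : φ 1 = 1)
    (hexc : ∃ (ι : Type) (l : Filter ι) (h : ι → A), l.NeBot ∧
      (∀ i : ι, 0 ≤ h i ∧ ‖h i‖ = 1) ∧
      ∀ a : A,
        Filter.Tendsto (fun i => ‖CFC.sqrt (h i) * a * CFC.sqrt (h i) - φ a • h i‖)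
          l (nhds 0)) :
    ∃ (ι : Type) (l : Filter ι) (p : ι → A), l.NeBot ∧
      (∀ i : ι, IsSelfAdjoint (p i) ∧ IsIdempotentElem (p i) ∧ p i ≠ 0) ∧
      ∀ a : A,
        Filter.Tendsto (fun i => ‖p i * a * p i - φ a • p i‖) l (nhds 0) :=
  excision_by_projections_of_real_rank_zero_general A hrr φ hexc
end

section
/- Let A be a unital C*-algebra, q ∈ A a projection, and x ∈ A a unitary. Then ‖qx − xq‖² = max{‖q − q x q x* q‖, ‖q − q x* q x q‖}. -/
/-!
Write `p = 1 - q`. The commutator splits as `qx - xq = qxp - pxq` into two corners with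
orthogonal ranges and orthogonal supports, so its norm is the larger of the two corner norms.
By the C*-identity, `‖qxp‖² = ‖qxp·px*q‖ = ‖q - qxqx*q‖` and `‖pxq‖² = ‖qx*p·pxq‖ = ‖q - qx*qxq‖`,
using `xx* = x*x = 1`.
-/

theorem mul_mul_mul_mul_mul_eq_zero_of_mul_eq_zero {R : Type*} [SemigroupWithZero R]
    {p q : R} (h : q * p = 0) (a b : R) : p * a * q * (p * b * q) = 0 := by
  rw [mul_assoc (p * a), ← mul_assoc q, ← mul_assoc q, h, zero_mul, zero_mul, mul_zero]

theorem IsIdempotentElem.mul_one_sub_mul_mul_one_sub_mul {R : Type*} [Ring R] {q x y : R}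
    (hq : IsIdempotentElem q) (hxy : x * y = 1) :
    q * x * (1 - q) * ((1 - q) * y * q) = q - q * x * q * y * q := by
  calc q * x * (1 - q) * ((1 - q) * y * q) = q * x * ((1 - q) * (1 - q)) * y * q := by
        simp only [mul_assoc]
    _ = q * (x * y) * q - q * x * q * y * q := by rw [hq.one_sub.eq]; noncomm_ring
    _ = q - q * x * q * y * q := by rw [hxy, mul_one, hq.eq]

theorem CStarRing.norm_add_sq_eq_max_of_star_mul_eq_zero {A : Type*} [NonUnitalCStarAlgebra A]
    {a b : A} (h₁ : star a * b = 0) (h₂ : a * star b = 0) :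
    ‖a + b‖ ^ 2 = max (‖a‖ ^ 2) (‖b‖ ^ 2) := by
  have h₁' : star b * a = 0 := by simpa using congr(star $h₁)
  have hcross : star (a + b) * (a + b) = star a * a + star b * b := by
    rw [star_add, add_mul, mul_add, mul_add, h₁, h₁']
    abel
  have horth : star a * a * (star b * b) = 0 := by
    rw [mul_assoc, ← mul_assoc a, h₂, zero_mul, mul_zero]
  rw [sq, sq, sq, ← norm_star_mul_self, hcross,
    (IsSelfAdjoint.star_mul_self a).norm_add_eq_max (.star_mul_self b) horth,
    norm_star_mul_self, norm_star_mul_self]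

/-- For a projection `q` and a unitary `x` in a unital C*-algebra,
`‖[q,x]‖² = max{‖q - qxqx*q‖, ‖q - qx*qxq‖}`. -/
theorem commutator_norm_sq_eq
    (A : Type) [CStarAlgebra A] (q x : A)
    (hq : IsSelfAdjoint q ∧ IsIdempotentElem q) (hx : x ∈ unitary A) :
    ‖q * x - x * q‖ ^ 2 =
      max ‖q - q * x * q * star x * q‖ ‖q - q * star x * q * x * q‖ := by
  have hq : IsStarProjection q := ⟨hq.2, hq.1⟩
  have hp : IsStarProjection (1 - q) := hq.one_sub
  have hqp : q * (1 - q) = 0 := hq.mul_one_sub_self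
  have hpq : (1 - q) * q = 0 := hq.one_sub_mul_self
  have hstar_qxp : star (q * x * (1 - q)) = (1 - q) * star x * q := by
    simp only [star_mul, hq.isSelfAdjoint.star_eq, hp.isSelfAdjoint.star_eq, mul_assoc]
  have hstar_pxq : star ((1 - q) * x * q) = q * star x * (1 - q) := by
    simp only [star_mul, hq.isSelfAdjoint.star_eq, hp.isSelfAdjoint.star_eq, mul_assoc]
  have hsplit : q * x - x * q = q * x * (1 - q) + -((1 - q) * x * q) := by noncomm_ring
  have hnorm_qxp : ‖q * x * (1 - q)‖ ^ 2 = ‖q - q * x * q * star x * q‖ := by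
    rw [sq, ← CStarRing.norm_self_mul_star, hstar_qxp,
      hq.isIdempotentElem.mul_one_sub_mul_mul_one_sub_mul (Unitary.mul_star_self_of_mem hx)]
  have hnorm_pxq : ‖(1 - q) * x * q‖ ^ 2 = ‖q - q * star x * q * x * q‖ := by
    rw [sq, ← CStarRing.norm_star_mul_self, hstar_pxq,
      hq.isIdempotentElem.mul_one_sub_mul_mul_one_sub_mul (Unitary.star_mul_self_of_mem hx)]
  rw [hsplit, CStarRing.norm_add_sq_eq_max_of_star_mul_eq_zero, norm_neg, hnorm_qxp, hnorm_pxq]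
  · rw [hstar_qxp, mul_neg, mul_mul_mul_mul_mul_eq_zero_of_mul_eq_zero hqp, neg_zero]
  · rw [star_neg, hstar_pxq, mul_neg, mul_mul_mul_mul_mul_eq_zero_of_mul_eq_zero hpq, neg_zero]
end

section
/- Let A be a unital C*-algebra, q ∈ A a projection, x ∈ A a unitary, and suppose ρ : M → A is a *-monomorphism from a finite-dimensional C*-algebra M with ρ(P) = q for a projection P ∈ M, and Φ : A → M a unital completely positive map. Then ‖[q, x]‖² ≤ max{‖P − Φ(x)Φ(x*)‖, ‖P − Φ(x*)Φ(x)‖} + 2‖q x q − ρ(Φ(x))‖. -/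
/-- A linear map between C*-algebras is completely positive if all its matrix
amplifications preserve positivity. -/
def IsCompletelyPositive {A M : Type} [CStarAlgebra A] [CStarAlgebra M]
    (Φ : A →ₗ[ℂ] M) : Prop :=
  ∀ (n : ℕ) (x : Matrix (Fin n) (Fin n) A), (∃ y : Matrix (Fin n) (Fin n) A, x = star y * y) →
    ∃ z : Matrix (Fin n) (Fin n) M, x.map Φ = star z * z

lemma norm_one_le' {A : Type} [CStarAlgebra A] : ‖(1:A)‖ ≤ 1 := by
  have := CStarRing.norm_star_mul_self (x := (1:A))
  simp at this
  nlinarith [norm_nonneg (1:A)]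

lemma smul_proj_nonneg {A : Type} [CStarAlgebra A] [PartialOrder A] [StarOrderedRing A]
    {r : ℝ} (hr : 0 ≤ r) {e : A} (hesa : star e = e) (he2 : e * e = e) :
    0 ≤ r • e := by
  have key : r • e = star (Real.sqrt r • e) * (Real.sqrt r • e) := by
    rw [star_smul, star_trivial, hesa, smul_mul_smul_comm, Real.mul_self_sqrt hr, he2]
  rw [key]
  exact star_mul_self_nonneg _

lemma conj_proj_le {A : Type} [CStarAlgebra A] [PartialOrder A] [StarOrderedRing A]
    {k : ℝ} {e : A} (he2 : e * e = e) :
    e * algebraMap ℝ A k * e = k • e := by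
  rw [show e * algebraMap ℝ A k = algebraMap ℝ A k * e from (Algebra.commutes k e).symm,
    mul_assoc, he2, ← Algebra.smul_def]

set_option maxHeartbeats 1000000 in
/-- A unital completely positive map is contractive on unitaries. -/
lemma ucp_contractive {A M : Type} [CStarAlgebra A] [CStarAlgebra M]
    [PartialOrder M] [StarOrderedRing M]
    (Φ : A →ₗ[ℂ] M) (hΦ1 : Φ 1 = 1) (hΦstar : ∀ a, Φ (star a) = star (Φ a))
    (hΦcp : IsCompletelyPositive Φ) (x : A) (hx : star x * x = 1) : ‖Φ x‖ ≤ 1 := by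
  set a := Φ x with ha
  have hY : (!![1, x; star x, 1] : Matrix (Fin 2) (Fin 2) A)
      = star !![1, x; 0, 0] * !![1, x; 0, 0] := by
    ext i j
    fin_cases i <;> fin_cases j <;>
      simp [Matrix.star_eq_conjTranspose, Matrix.conjTranspose_apply, Matrix.mul_apply,
        Fin.sum_univ_two, hx]
  obtain ⟨z, hz⟩ := hΦcp 2 _ ⟨_, hY⟩
  have hmap : (!![1, x; star x, 1] : Matrix (Fin 2) (Fin 2) A).map Φ = !![1, a; star a, 1] := by
    ext i j
    fin_cases i <;> fin_cases j <;> simp [Matrix.map_apply, hΦ1, hΦstar, ha]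
  rw [hmap] at hz
  set w : Matrix (Fin 2) (Fin 2) M := !![0, -a; 0, 1] with hw
  have h : star w * (!![1, a; star a, 1] : Matrix (Fin 2) (Fin 2) M) * w
      = star (z * w) * (z * w) := by
    rw [hz, star_mul]
    simp only [mul_assoc]
  have h11 := congrFun (congrFun h 1) 1
  have lhs : (star w * (!![1, a; star a, 1] : Matrix (Fin 2) (Fin 2) M) * w) 1 1
      = 1 - star a * a := by
    simp [hw, Matrix.star_eq_conjTranspose, Matrix.conjTranspose_apply, Matrix.mul_apply,
      Fin.sum_univ_two]
    noncomm_ring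
  have rhs : (star (z * w) * (z * w)) 1 1
      = star ((z*w) 0 1) * ((z*w) 0 1) + star ((z*w) 1 1) * ((z*w) 1 1) := by
    simp [Matrix.star_eq_conjTranspose, Matrix.conjTranspose_apply, Matrix.mul_apply,
      Fin.sum_univ_two]
  rw [lhs, rhs] at h11
  have hpos : (0:M) ≤ 1 - star a * a := by
    rw [h11]
    exact add_nonneg (star_mul_self_nonneg _) (star_mul_self_nonneg _)
  have hle : star a * a ≤ 1 := sub_nonneg.mp hpos
  have h2 : ‖star a * a‖ ≤ ‖(1:M)‖ :=
    CStarAlgebra.norm_le_norm_of_nonneg_of_le (star_mul_self_nonneg a) hle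
  have h3 := CStarRing.norm_star_mul_self (x := a)
  nlinarith [norm_nonneg a, norm_one_le' (A := M)]

set_option maxHeartbeats 1000000 in
/-- Popa's commutator estimate: if `ρ : M → A` is a *-monomorphism from a
finite-dimensional C*-algebra, `q = ρ(P)` for a projection `P ∈ M`, `Φ : A → M` is
unital completely positive, and `x` is unitary, then
`‖[q,x]‖² ≤ max{‖P - Φ(x)Φ(x*)‖, ‖P - Φ(x*)Φ(x)‖} + 2‖qxq - ρ(Φ(x))‖`. -/
theorem commutator_estimate
    (A M : Type) [CStarAlgebra A] [CStarAlgebra M] [FiniteDimensional ℂ M]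
    (ρ : M →⋆ₐ[ℂ] A) (hρ : Function.Injective ρ)
    (Φ : A →ₗ[ℂ] M) (hΦ1 : Φ 1 = 1) (hΦstar : ∀ a, Φ (star a) = star (Φ a))
    (hΦcp : IsCompletelyPositive Φ)
    (P : M) (hP : IsSelfAdjoint P ∧ IsIdempotentElem P)
    (q : A) (hq : ρ P = q)
    (x : A) (hx : x ∈ unitary A) :
    ‖q * x - x * q‖ ^ 2 ≤
      max ‖P - Φ x * Φ (star x)‖ ‖P - Φ (star x) * Φ x‖ +
        2 * ‖q * x * q - ρ (Φ x)‖ := by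
  letI : PartialOrder A := CStarAlgebra.spectralOrder _
  letI : StarOrderedRing A := CStarAlgebra.spectralOrderedRing _
  letI : PartialOrder M := CStarAlgebra.spectralOrder _
  letI : StarOrderedRing M := CStarAlgebra.spectralOrderedRing _
  obtain ⟨hsxx, hxx⟩ := Unitary.mem_iff.mp hx
  have hq2 : q * q = q := by rw [← hq, ← map_mul, hP.2]
  have hqsa : star q = q := by rw [← hq, ← map_star, hP.1.star_eq]
  set y := q * x * q with hy
  set z := ρ (Φ x) with hzdef
  set D := ‖y - z‖ with hD
  have hD0 : 0 ≤ D := norm_nonneg _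
  -- norm bounds
  have hzn : ‖z‖ ≤ 1 :=
    le_trans (NonUnitalStarAlgHom.norm_apply_le ρ (Φ x))
      (ucp_contractive Φ hΦ1 hΦstar hΦcp x hsxx)
  have hqn : ‖q‖ ≤ 1 := by
    have h := CStarRing.norm_star_mul_self (x := q)
    rw [hqsa, hq2] at h
    nlinarith [norm_nonneg q]
  have hxn : ‖x‖ ≤ 1 := by
    have h := CStarRing.norm_star_mul_self (x := x)
    rw [hsxx] at h
    nlinarith [norm_nonneg x, norm_one_le' (A := A)]
  have hyn : ‖y‖ ≤ 1 := by
    have m1 := norm_mul_le (q * x) q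
    have m2 := norm_mul_le q x
    nlinarith [norm_nonneg (q * x), norm_nonneg q, norm_nonneg x]
  -- helper rewrites
  have hq2' : ∀ t : A, q * (q * t) = q * t := fun t => by rw [← mul_assoc, hq2]
  have hxx' : ∀ t : A, x * (star x * t) = t := fun t => by rw [← mul_assoc, hxx, one_mul]
  have hsxx' : ∀ t : A, star x * (x * t) = t := fun t => by rw [← mul_assoc, hsxx, one_mul]
  -- the two corner pieces
  set s := star (q*x*(1-q)) * (q*x*(1-q)) with hs
  set t := star ((1-q)*x*q) * ((1-q)*x*q) with ht
  have hcc : star (q*x - x*q) * (q*x - x*q) = s + t := by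
    rw [hs, ht]
    simp only [star_sub, star_mul, star_one, hqsa, mul_sub, sub_mul, mul_one, one_mul, mul_assoc,
      hq2, hq2', hxx, hxx', hsxx, hsxx']
    abel
  have hs0 : 0 ≤ s := star_mul_self_nonneg _
  have ht0 : 0 ≤ t := star_mul_self_nonneg _
  have hesa : star ((1:A) - q) = (1:A) - q := by simp [hqsa]
  have he2 : ((1:A) - q) * ((1:A) - q) = (1:A) - q := by
    simp only [mul_sub, sub_mul, mul_one, one_mul, hq2]
    abel
  have hse : s = (1-q) * s * (1-q) := by
    rw [hs]
    simp only [star_sub, star_mul, star_one, hqsa, mul_sub, sub_mul, mul_one, one_mul, mul_assoc,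
      hq2, hq2']
    abel
  have hte : t = q * t * q := by
    rw [ht]
    simp only [star_sub, star_mul, star_one, hqsa, mul_sub, sub_mul, mul_one, one_mul, mul_assoc,
      hq2, hq2']
  set N := max ‖s‖ ‖t‖ with hN
  have hN0 : (0:ℝ) ≤ N := le_trans (norm_nonneg s) (le_max_left _ _)
  have hsN : s ≤ N • ((1:A) - q) := by
    calc s = (1-q) * s * (1-q) := hse
    _ ≤ (1-q) * algebraMap ℝ A ‖s‖ * (1-q) :=
        IsSelfAdjoint.conjugate_le_conjugate
          (IsSelfAdjoint.le_algebraMap_norm_self (IsSelfAdjoint.of_nonneg hs0)) hesa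
    _ = ‖s‖ • ((1:A)-q) := conj_proj_le he2
    _ ≤ N • ((1:A)-q) := by
        rw [← sub_nonneg, ← sub_smul]
        exact smul_proj_nonneg (by simp [hN]) hesa he2
  have htN : t ≤ N • q := by
    calc t = q * t * q := hte
    _ ≤ q * algebraMap ℝ A ‖t‖ * q :=
        IsSelfAdjoint.conjugate_le_conjugate
          (IsSelfAdjoint.le_algebraMap_norm_self (IsSelfAdjoint.of_nonneg ht0)) hqsa
    _ = ‖t‖ • q := conj_proj_le hq2
    _ ≤ N • q := by
        rw [← sub_nonneg, ← sub_smul]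
        exact smul_proj_nonneg (by simp [hN]) hqsa hq2
  have hsum : s + t ≤ N • (1:A) := by
    have heq : N • ((1:A)-q) + N • q = N • (1:A) := by
      rw [← smul_add, sub_add_cancel]
    calc s + t ≤ N • ((1:A)-q) + N • q := add_le_add hsN htN
    _ = N • (1:A) := heq
  -- norm of the commutator squared
  have hnorm : ‖q*x - x*q‖^2 ≤ N := by
    have h0 : 0 ≤ s + t := add_le_add hs0 ht0 |>.trans_eq' (by simp) |>.trans_eq (by simp)
    have h1 : ‖s + t‖ ≤ ‖N • (1:A)‖ :=
      CStarAlgebra.norm_le_norm_of_nonneg_of_le (add_nonneg hs0 ht0) hsum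
    have h2 : ‖N • (1:A)‖ ≤ N := by
      rw [norm_smul, Real.norm_eq_abs, abs_of_nonneg hN0]
      nlinarith [norm_one_le' (A := A)]
    have h3 : ‖q*x - x*q‖^2 = ‖star (q*x - x*q) * (q*x - x*q)‖ := by
      rw [CStarRing.norm_star_mul_self, pow_two]
    rw [h3, hcc]
    linarith
  -- identify the two corner norms
  have hsnorm : ‖s‖ = ‖q - y * star y‖ := by
    have h1 : ‖s‖ = ‖(q*x*(1-q)) * star (q*x*(1-q))‖ := by
      rw [hs, CStarRing.norm_star_mul_self, CStarRing.norm_self_mul_star]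
    have h2 : (q*x*(1-q)) * star (q*x*(1-q)) = q - y * star y := by
      rw [hy]
      simp only [star_sub, star_mul, star_one, hqsa, mul_sub, sub_mul, mul_one, one_mul, mul_assoc,
        hq2, hq2', hxx, hxx', hsxx, hsxx']
      abel
    rw [h1, h2]
  have htnorm : ‖t‖ = ‖q - star y * y‖ := by
    have h2 : t = q - star y * y := by
      rw [ht, hy]
      simp only [star_sub, star_mul, star_one, hqsa, mul_sub, sub_mul, mul_one, one_mul, mul_assoc,
        hq2, hq2', hxx, hxx', hsxx, hsxx']
      abel
    rw [h2]
  -- comparison with the image of Φ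
  have hρ1 : ρ (Φ (star x)) = star z := by rw [hΦstar, map_star, hzdef]
  have hB1 : ‖q - y * star y‖ ≤ ‖P - Φ x * Φ (star x)‖ + 2*D := by
    have key : q - y*star y = ρ (P - Φ x * Φ (star x)) + (z * star z - y * star y) := by
      rw [map_sub, map_mul, hq, hρ1, ← hzdef]
      abel
    have keq : z*star z - y*star y = z*(star z - star y) + (z-y)*star y := by noncomm_ring
    have e1 : ‖star z - star y‖ = D := by
      rw [← star_sub, norm_star, norm_sub_rev, hD]
    have e2 : ‖z - y‖ = D := by rw [norm_sub_rev, hD]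
    have e3 : ‖star y‖ = ‖y‖ := norm_star y
    have m1 := norm_mul_le z (star z - star y)
    have m2 := norm_mul_le (z-y) (star y)
    calc ‖q - y*star y‖ ≤ ‖ρ (P - Φ x * Φ (star x))‖ + ‖z*star z - y*star y‖ :=
        key ▸ norm_add_le _ _
    _ ≤ ‖P - Φ x * Φ (star x)‖ + 2*D := by
        have h1 := NonUnitalStarAlgHom.norm_apply_le ρ (P - Φ x * Φ (star x))
        have h2 : ‖z*star z - y*star y‖ ≤ 2*D := by
          calc ‖z*star z - y*star y‖ ≤ ‖z*(star z - star y)‖ + ‖(z-y)*star y‖ :=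
              keq ▸ norm_add_le _ _
          _ ≤ 2*D := by nlinarith [norm_nonneg z, norm_nonneg y]
        linarith
  have hB2 : ‖q - star y * y‖ ≤ ‖P - Φ (star x) * Φ x‖ + 2*D := by
    have key : q - star y*y = ρ (P - Φ (star x) * Φ x) + (star z * z - star y * y) := by
      rw [map_sub, map_mul, hq, hρ1, ← hzdef]
      abel
    have keq : star z*z - star y*y = star z*(z - y) + (star z - star y)*y := by noncomm_ring
    have e1 : ‖star z - star y‖ = D := by
      rw [← star_sub, norm_star, norm_sub_rev, hD]
    have e2 : ‖z - y‖ = D := by rw [norm_sub_rev, hD]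
    have e3 : ‖star z‖ = ‖z‖ := norm_star z
    have m1 := norm_mul_le (star z) (z - y)
    have m2 := norm_mul_le (star z - star y) y
    calc ‖q - star y*y‖ ≤ ‖ρ (P - Φ (star x) * Φ x)‖ + ‖star z*z - star y*y‖ :=
        key ▸ norm_add_le _ _
    _ ≤ ‖P - Φ (star x) * Φ x‖ + 2*D := by
        have h1 := NonUnitalStarAlgHom.norm_apply_le ρ (P - Φ (star x) * Φ x)
        have h2 : ‖star z*z - star y*y‖ ≤ 2*D := by
          calc ‖star z*z - star y*y‖ ≤ ‖star z*(z-y)‖ + ‖(star z - star y)*y‖ :=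
              keq ▸ norm_add_le _ _
          _ ≤ 2*D := by nlinarith [norm_nonneg z, norm_nonneg y]
        linarith
  -- final assembly
  calc ‖q*x - x*q‖^2 ≤ N := hnorm
  _ = max ‖q - y * star y‖ ‖q - star y * y‖ := by rw [hN, hsnorm, htnorm]
  _ ≤ max (‖P - Φ x * Φ (star x)‖ + 2*D) (‖P - Φ (star x) * Φ x‖ + 2*D) := max_le_max hB1 hB2
  _ = max ‖P - Φ x * Φ (star x)‖ ‖P - Φ (star x) * Φ x‖ + 2*D := max_add_add_right _ _ _
end

section
/- In the setting of Popa's local quantization theorem, for each of the *-monomorphisms ρ_λ : P B(L²(A,φ)) P → A constructed there, and for every unitary u ∈ A, one has ‖[u, ρ_λ(P)]‖² ≤ ‖[P, π_φ(u)]‖² + 2‖ρ_λ(P) u ρ_λ(P) − ρ_λ(Φ(u))‖. -/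
/-!
Write `q = ρ P` and `s = q u q`. With respect to `q`, the commutator `u q - q u` is the sum of the
off-diagonal pieces `(1 - q) u q` and `-q u (1 - q)`, and the norm of such a sum is the larger
of the norms of the pieces, since `c⋆c` splits into positive elements of the orthogonal corners
`q A q` and `(1 - q) A (1 - q)`. Now `‖(1 - q) u q‖² = ‖q - s⋆s‖`, and replacing `s` by `ρ (Φ u)`
costs at most `2 ‖s - ρ (Φ u)‖`. As `ρ` is isometric,
`‖q - ρ(Φ u)⋆ρ(Φ u)‖ = ‖P - (P π(u) P)⋆(P π(u) P)‖ = ‖(1 - P) π(u) P‖² ≤ ‖[P, π(u)]‖²`.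
The other piece is handled in the same way with `u⋆` in place of `u`.
-/

open scoped ComplexOrder InnerProductSpace

/-- The (non-unital) corner `P B(H) P` of `B(H)` associated to a projection `P`. -/
def corner {H : Type} [NormedAddCommGroup H] [InnerProductSpace ℂ H] [CompleteSpace H]
    (P : H →L[ℂ] H) (h1 : IsIdempotentElem P) (h2 : IsSelfAdjoint P) :
    NonUnitalStarSubalgebra ℂ (H →L[ℂ] H) where
  carrier := {T | P * T * P = T}
  zero_mem' := by simp
  add_mem' := by
    intro a b ha hb
    simp only [Set.mem_setOf_eq] at *
    rw [mul_add, add_mul, ha, hb]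
  smul_mem' := by
    intro r a ha
    simp only [Set.mem_setOf_eq] at *
    rw [mul_smul_comm, smul_mul_assoc, ha]
  mul_mem' := by
    intro a b ha hb
    simp only [Set.mem_setOf_eq] at *
    have ha1 : a * P = a := by
      conv_lhs => rw [← ha]
      rw [show P * a * P * P = P * a * (P * P) by noncomm_ring, h1.eq, ha]
    have hb1 : P * b = b := by
      conv_lhs => rw [← hb]
      rw [show P * (P * b * P) = (P * P) * b * P by noncomm_ring, h1.eq, hb]
    rw [show P * (a * b) * P = (P * a) * (b * P) by noncomm_ring]
    have ha2 : P * a = a := by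
      conv_lhs => rw [← ha]
      rw [show P * (P * a * P) = (P * P) * a * P by noncomm_ring, h1.eq, ha]
    have hb2 : b * P = b := by
      conv_lhs => rw [← hb]
      rw [show P * b * P * P = P * b * (P * P) by noncomm_ring, h1.eq, hb]
    rw [ha2, hb2]
  star_mem' := by
    intro a ha
    simp only [Set.mem_setOf_eq] at *
    conv_lhs => rw [← ha]
    conv_rhs => rw [← ha]
    simp only [star_mul, h2.star_eq, ← mul_assoc, h1.eq]
    rw [mul_assoc, h1.eq]

section StarRing

variable {R : Type*} [Ring R] [StarRing R] {p : R}

lemma IsStarProjection.sub_star_mul_self_mul_mul (hp : IsStarProjection p) {w : R}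
    (hw : star w * w = 1) :
    p - star (p * w * p) * (p * w * p) = star ((1 - p) * w * p) * ((1 - p) * w * p) := by
  have hpp : ∀ x : R, x * p * p = x * p := fun x => by rw [mul_assoc, hp.isIdempotentElem.eq]
  have hww : ∀ x : R, x * star w * w = x := fun x => by rw [mul_assoc, hw, mul_one]
  simp only [star_mul, star_sub, hp.isSelfAdjoint.star_eq, mul_sub, sub_mul, one_mul, ← mul_assoc,
    hpp, hww, hp.isIdempotentElem.eq]
  abel

lemma IsStarProjection.one_sub_mul_mul_eq (hp : IsStarProjection p) (w : R) :
    (1 - p) * w * p = -((p * w - w * p) * p) := by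
  simp only [sub_mul, one_mul, mul_assoc, hp.isIdempotentElem.eq]
  abel

lemma IsStarProjection.mul_sub_mul_eq (hp : IsStarProjection p) (w : R) :
    w * p - p * w = (1 - p) * w * p - star ((1 - p) * star w * p) := by
  simp only [star_mul, star_sub, star_star, hp.isSelfAdjoint.star_eq, sub_mul, one_mul,
    ← mul_assoc]
  abel

end StarRing

lemma norm_star_mul_self_sub_star_mul_self_le {A : Type*} [NonUnitalNormedRing A] [StarRing A]
    [NormedStarGroup A] (a b : A) :
    ‖star a * a - star b * b‖ ≤ (‖a‖ + ‖b‖) * ‖a - b‖ := by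
  have h : star a * a - star b * b = star a * (a - b) + star (a - b) * b := by
    simp only [star_sub, mul_sub, sub_mul]
    abel
  calc ‖star a * a - star b * b‖ ≤ ‖star a‖ * ‖a - b‖ + ‖star (a - b)‖ * ‖b‖ := by
        rw [h]; exact norm_add_le_of_le (norm_mul_le _ _) (norm_mul_le _ _)
    _ = (‖a‖ + ‖b‖) * ‖a - b‖ := by rw [norm_star, norm_star]; ring

section CStarRing

variable {A : Type*} [NormedRing A] [StarRing A] [CStarRing A]

lemma norm_le_one_of_mem_unitary {w : A} (hw : w ∈ unitary A) : ‖w‖ ≤ 1 := by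
  rcases subsingleton_or_nontrivial A with _ | _
  · simp [Subsingleton.elim w 0]
  · exact (CStarRing.norm_of_mem_unitary hw).le

variable {p : A}

lemma IsStarProjection.norm_sub_star_mul_self_mul_mul_le (hp : IsStarProjection p) {w : A}
    (hw : w ∈ unitary A) :
    ‖p - star (p * w * p) * (p * w * p)‖ ≤ ‖p * w - w * p‖ ^ 2 := by
  rw [hp.sub_star_mul_self_mul_mul (Unitary.star_mul_self_of_mem hw),
    CStarRing.norm_star_mul_self, ← sq, hp.one_sub_mul_mul_eq, norm_neg]
  gcongr
  exact (norm_mul_le _ _).trans (mul_le_of_le_one_right (norm_nonneg _) (hp.norm_le p))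

lemma IsStarProjection.norm_mul_mul_le_one (hp : IsStarProjection p) {w : A}
    (hw : w ∈ unitary A) : ‖p * w * p‖ ≤ 1 := by
  have hp1 := hp.norm_le p
  calc ‖p * w * p‖ ≤ ‖p‖ * ‖w‖ * ‖p‖ := norm_mul₃_le
    _ ≤ 1 * 1 * 1 := by gcongr; exact norm_le_one_of_mem_unitary hw
    _ = 1 := by ring

lemma IsStarProjection.norm_one_sub_mul_mul_sq_le (hp : IsStarProjection p) {w : A}
    (hw : w ∈ unitary A) {t : A} (ht : ‖t‖ ≤ 1) :
    ‖(1 - p) * w * p‖ ^ 2 ≤ ‖p - star t * t‖ + 2 * ‖p * w * p - t‖ := by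
  set s := p * w * p
  have hs : ‖s‖ ≤ 1 := hp.norm_mul_mul_le_one hw
  calc ‖(1 - p) * w * p‖ ^ 2 = ‖(p - star t * t) + (star t * t - star s * s)‖ := by
        rw [sq, ← CStarRing.norm_star_mul_self,
          ← hp.sub_star_mul_self_mul_mul (Unitary.star_mul_self_of_mem hw), sub_add_sub_cancel]
    _ ≤ ‖p - star t * t‖ + (‖t‖ + ‖s‖) * ‖t - s‖ :=
        norm_add_le_of_le le_rfl (norm_star_mul_self_sub_star_mul_self_le t s)
    _ ≤ ‖p - star t * t‖ + 2 * ‖s - t‖ := by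
        rw [norm_sub_rev t s]; gcongr; linarith

end CStarRing

section CStarAlgebra

variable {A : Type*} [CStarAlgebra A] {p : A}

section Order

variable [PartialOrder A] [StarOrderedRing A]

lemma IsStarProjection.le_smul_of_mul_mul_eq (hp : IsStarProjection p) {z : A}
    (hz : IsSelfAdjoint z) (hpz : p * z * p = z) {M : ℝ} (hM : ‖z‖ ≤ M) : z ≤ M • p := calc
  z = star p * z * p := by rw [hp.isSelfAdjoint.star_eq, hpz]
  _ ≤ ‖z‖ • (star p * p) := CStarAlgebra.star_left_conjugate_le_norm_smul hz
  _ ≤ M • p := by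
      rw [hp.isSelfAdjoint.star_eq, hp.isIdempotentElem.eq]
      exact smul_le_smul_of_nonneg_right hM hp.nonneg

lemma IsStarProjection.norm_add_le_of_mem_orthogonal_corners (hp : IsStarProjection p) {x y : A}
    (hx : 0 ≤ x) (hy : 0 ≤ y) (hpx : p * x * p = x) (hpy : (1 - p) * y * (1 - p) = y) :
    ‖x + y‖ ≤ max ‖x‖ ‖y‖ := by
  set M := max ‖x‖ ‖y‖
  refine (CStarAlgebra.norm_le_iff_le_algebraMap _ ((norm_nonneg x).trans (le_max_left _ _))
    (add_nonneg hx hy)).2 ?_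
  calc x + y ≤ M • p + M • (1 - p) :=
        add_le_add (hp.le_smul_of_mul_mul_eq (.of_nonneg hx) hpx (le_max_left _ _))
          (hp.one_sub.le_smul_of_mul_mul_eq (.of_nonneg hy) hpy (le_max_right _ _))
    _ = algebraMap ℝ A M := by rw [← smul_add, add_sub_cancel, Algebra.algebraMap_eq_smul_one]

end Order

lemma IsStarProjection.norm_sub_star_sq_le_max (hp : IsStarProjection p) {x y : A}
    (hx : (1 - p) * x * p = x) (hy : (1 - p) * y * p = y) :
    ‖x - star y‖ ^ 2 ≤ max (‖x‖ ^ 2) (‖y‖ ^ 2) := by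
  let _ := CStarAlgebra.spectralOrder A
  have _ := CStarAlgebra.spectralOrderedRing A
  have hleft : ∀ {e f z : A}, IsIdempotentElem e → e * z * f = z → e * z = z :=
    fun he h => by rw [← h, ← mul_assoc, ← mul_assoc, he.eq]
  have hright : ∀ {e f z : A}, IsIdempotentElem f → e * z * f = z → z * f = z :=
    fun hf h => by rw [← h, mul_assoc, hf.eq]
  have hx₁ := hleft hp.one_sub.isIdempotentElem hx
  have hx₂ := hright hp.isIdempotentElem hx
  have hy₁ := hleft hp.one_sub.isIdempotentElem hy
  have hy₂ := hright hp.isIdempotentElem hy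
  have hyx : y * x = 0 := calc
    y * x = y * (p * (1 - p)) * x := by rw [← mul_assoc, hy₂, mul_assoc, hx₁]
    _ = 0 := by rw [hp.mul_one_sub_self, mul_zero, zero_mul]
  have hdecomp : star (x - star y) * (x - star y) = star x * x + y * star y := by
    simp only [star_sub, star_star, sub_mul, mul_sub, ← star_mul, hyx, star_zero]
    abel
  have hpx : p * (star x * x) * p = star x * x := by
    rw [mul_assoc, mul_assoc, hx₂, ← mul_assoc, ← hp.isSelfAdjoint.star_eq, ← star_mul, hx₂]
  have hpy : (1 - p) * (y * star y) * (1 - p) = y * star y := by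
    rw [← mul_assoc, hy₁, mul_assoc, ← hp.one_sub.isSelfAdjoint.star_eq, ← star_mul, hy₁]
  calc ‖x - star y‖ ^ 2 = ‖star x * x + y * star y‖ := by
        rw [← hdecomp, CStarRing.norm_star_mul_self, sq]
    _ ≤ max ‖star x * x‖ ‖y * star y‖ :=
        hp.norm_add_le_of_mem_orthogonal_corners (star_mul_self_nonneg x) (mul_star_self_nonneg y)
          hpx hpy
    _ = max (‖x‖ ^ 2) (‖y‖ ^ 2) := by
        rw [CStarRing.norm_star_mul_self, CStarRing.norm_self_mul_star, sq, sq]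

lemma IsStarProjection.norm_mul_sub_mul_sq_le (hp : IsStarProjection p) (w : A) :
    ‖w * p - p * w‖ ^ 2 ≤ max (‖(1 - p) * w * p‖ ^ 2) (‖(1 - p) * star w * p‖ ^ 2) := by
  have hcorner : ∀ a : A, (1 - p) * ((1 - p) * a * p) * p = (1 - p) * a * p := fun a => by
    rw [← mul_assoc, ← mul_assoc, hp.one_sub.isIdempotentElem.eq, mul_assoc, hp.isIdempotentElem.eq]
  rw [hp.mul_sub_mul_eq]
  exact hp.norm_sub_star_sq_le_max (hcorner w) (hcorner (star w))

end CStarAlgebra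

namespace corner

variable {H : Type} [NormedAddCommGroup H] [InnerProductSpace ℂ H] [CompleteSpace H]
  {P : H →L[ℂ] H} {hP1 : IsIdempotentElem P} {hP2 : IsSelfAdjoint P}

lemma isStarProjection_mk_self (hPmem : P ∈ corner P hP1 hP2) :
    IsStarProjection (⟨P, hPmem⟩ : corner P hP1 hP2) :=
  ⟨Subtype.ext hP1.eq, Subtype.ext hP2.star_eq⟩

lemma norm_one_sub_mul_mul_sq_le {A : Type} [CStarAlgebra A] (π : A →⋆ₐ[ℂ] (H →L[ℂ] H))
    (hPmem : P ∈ corner P hP1 hP2) (ρ : corner P hP1 hP2 →⋆ₙₐ[ℂ] A) (hρ : Function.Injective ρ)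
    {w : A} (hw : w ∈ unitary A) {t : corner P hP1 hP2} (ht : (t : H →L[ℂ] H) = P * π w * P) :
    ‖(1 - ρ ⟨P, hPmem⟩) * w * ρ ⟨P, hPmem⟩‖ ^ 2 ≤
      ‖P * π w - π w * P‖ ^ 2 + 2 * ‖ρ ⟨P, hPmem⟩ * w * ρ ⟨P, hPmem⟩ - ρ t‖ := by
  have : IsClosed (corner P hP1 hP2 : Set (H →L[ℂ] H)) := isClosed_eq (by fun_prop) continuous_id
  have hP : IsStarProjection P := ⟨hP1, hP2⟩
  have hπw : π w ∈ unitary (H →L[ℂ] H) := Unitary.map_mem π hw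
  have hρ_norm : ∀ x, ‖ρ x‖ = ‖x‖ := NonUnitalStarAlgHom.norm_map ρ hρ
  have ht_norm : ‖ρ t‖ ≤ 1 := by
    rw [hρ_norm]
    change ‖(t : H →L[ℂ] H)‖ ≤ 1
    rw [ht]
    exact hP.norm_mul_mul_le_one hπw
  refine (((isStarProjection_mk_self hPmem).map ρ).norm_one_sub_mul_mul_sq_le hw ht_norm).trans ?_
  gcongr
  calc ‖ρ ⟨P, hPmem⟩ - star (ρ t) * ρ t‖ = ‖P - star (P * π w * P) * (P * π w * P)‖ := by
        rw [← map_star, ← map_mul, ← map_sub, hρ_norm, ← ht]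
        rfl
    _ ≤ ‖P * π w - π w * P‖ ^ 2 := hP.norm_sub_star_mul_self_mul_mul_le hπw

end corner

theorem popa_local_quantization_commutator_estimate_general
    (A : Type) [CStarAlgebra A]
    (H : Type) [NormedAddCommGroup H] [InnerProductSpace ℂ H] [CompleteSpace H]
    (π : A →⋆ₐ[ℂ] (H →L[ℂ] H))
    (P : H →L[ℂ] H) (hP1 : IsIdempotentElem P) (hP2 : IsSelfAdjoint P)
    (hPmem : P ∈ corner P hP1 hP2)
    (Φ : A → ↥(corner P hP1 hP2))
    (hΦ : ∀ a : A, (Φ a : H →L[ℂ] H) = P * π a * P)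
    (ρ : ↥(corner P hP1 hP2) →⋆ₙₐ[ℂ] A) (hρ : Function.Injective ρ)
    (u : A) (hu : u ∈ unitary A) :
    ‖u * ρ ⟨P, hPmem⟩ - ρ ⟨P, hPmem⟩ * u‖ ^ 2 ≤
      ‖P * π u - π u * P‖ ^ 2 +
        2 * ‖ρ ⟨P, hPmem⟩ * u * ρ ⟨P, hPmem⟩ - ρ (Φ u)‖ := by
  have hq : IsStarProjection (ρ ⟨P, hPmem⟩) := (corner.isStarProjection_mk_self hPmem).map ρ
  have hΦ_star : ((star (Φ u) : corner P hP1 hP2) : H →L[ℂ] H) = P * π (star u) * P := by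
    rw [StarMemClass.coe_star, hΦ, star_mul, star_mul, hP2.star_eq, map_star, mul_assoc]
  have hcomm_star : ‖P * π (star u) - π (star u) * P‖ = ‖P * π u - π u * P‖ := by
    rw [← norm_star, star_sub, star_mul, star_mul, map_star, star_star, hP2.star_eq, norm_sub_rev]
  have herr_star : ‖ρ ⟨P, hPmem⟩ * star u * ρ ⟨P, hPmem⟩ - ρ (star (Φ u))‖ =
      ‖ρ ⟨P, hPmem⟩ * u * ρ ⟨P, hPmem⟩ - ρ (Φ u)‖ := by
    rw [← norm_star, star_sub, map_star, star_star, star_mul, star_mul, hq.isSelfAdjoint.star_eq,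
      star_star, mul_assoc]
  calc ‖u * ρ ⟨P, hPmem⟩ - ρ ⟨P, hPmem⟩ * u‖ ^ 2
      ≤ max (‖(1 - ρ ⟨P, hPmem⟩) * u * ρ ⟨P, hPmem⟩‖ ^ 2)
          (‖(1 - ρ ⟨P, hPmem⟩) * star u * ρ ⟨P, hPmem⟩‖ ^ 2) := hq.norm_mul_sub_mul_sq_le u
    _ ≤ _ := by
      refine max_le (corner.norm_one_sub_mul_mul_sq_le π hPmem ρ hρ hu (hΦ u)) ?_
      rw [← hcomm_star, ← herr_star]
      exact corner.norm_one_sub_mul_mul_sq_le π hPmem ρ hρ (Unitary.star_mem hu) hΦ_star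

/-- The commutator estimate in Popa's local quantization: for any *-monomorphism ρ of
the corner `P B(L²(A,φ)) P` into A and any unitary u ∈ A,
`‖[u, ρ(P)]‖² ≤ ‖[P, π_φ(u)]‖² + 2‖ρ(P) u ρ(P) − ρ(Φ(u))‖`. -/
theorem popa_local_quantization_commutator_estimate
    (A : Type) [CStarAlgebra A]
    (φ : A →L[ℂ] ℂ) (hpos : ∀ a : A, 0 ≤ φ (star a * a)) (hone : φ 1 = 1)
    (hexc : ∃ (ι : Type) (l : Filter ι) (p : ι → A), l.NeBot ∧
      (∀ i : ι, IsSelfAdjoint (p i) ∧ IsIdempotentElem (p i) ∧ p i ≠ 0) ∧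
      ∀ a : A, Filter.Tendsto (fun i => ‖p i * a * p i - φ a • p i‖) l (nhds 0))
    (H : Type) [NormedAddCommGroup H] [InnerProductSpace ℂ H] [CompleteSpace H]
    (π : A →⋆ₐ[ℂ] (H →L[ℂ] H)) (ξ : H)
    (hGNS : ∀ a : A, φ a = ⟪ξ, π a ξ⟫_ℂ)
    (hcyc : Dense (Set.range fun a : A => π a ξ))
    (m : ℕ) (y : Fin m → A)
    (horth : ∀ i j : Fin m, φ (star (y j) * y i) = if i = j then 1 else 0)
    (P : H →L[ℂ] H) (hP1 : IsIdempotentElem P) (hP2 : IsSelfAdjoint P)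
    (hPrange : LinearMap.range (P : H →ₗ[ℂ] H) =
      Submodule.span ℂ (Set.range fun i : Fin m => π (y i) ξ))
    (hPmem : P ∈ corner P hP1 hP2)
    (Φ : A → ↥(corner P hP1 hP2))
    (hΦ : ∀ a : A, (Φ a : H →L[ℂ] H) = P * π a * P)
    (ρ : ↥(corner P hP1 hP2) →⋆ₙₐ[ℂ] A) (hρ : Function.Injective ρ)
    (u : A) (hu : u ∈ unitary A) :
    ‖u * ρ ⟨P, hPmem⟩ - ρ ⟨P, hPmem⟩ * u‖ ^ 2 ≤
      ‖P * π u - π u * P‖ ^ 2 +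
        2 * ‖ρ ⟨P, hPmem⟩ * u * ρ ⟨P, hPmem⟩ - ρ (Φ u)‖ :=
  popa_local_quantization_commutator_estimate_general A H π P hP1 hP2 hPmem Φ hΦ ρ hρ u hu
end
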